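/- arXiv:1410.1297 — 4 statements merged into one kernel-verified Lean document; each statement's English description precedes it below -/
import Mathlib

section
/- Let X be a complex Banach space, T a power-bounded operator with M = sup‖Tⁿ‖, and ω : ℕ → (0,∞) a decreasing function with ‖Tⁿ(I−T)‖ ≤ ω(n) for all n. Then for every λ ∈ 𝕋 \ {1} and every n ∈ ℕ with ω(n) < |1−λ|, λ ∈ ρ(T) and |1−λ|·‖R(λ,T)‖ ≤ ω(n)‖R(λ,T)‖ + M(1 + n|1−λ|). -/
/-- If `ω` is a positive decreasing dominating function for `T` and `T` is power-bounded
with constant `M`, then for `λ ∈ 𝕋 \ {1}` and `n` with `ω(n) < |1−λ|`, `λ ∈ ρ(T)` and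
`|1−λ|‖R(λ,T)‖ ≤ ω(n)‖R(λ,T)‖ + M(1 + n|1−λ|)`. -/
theorem stmt_6 {X : Type*} [NormedAddCommGroup X] [NormedSpace ℂ X] [CompleteSpace X]
    (T : X →L[ℂ] X) (M : ℝ) (hM : ∀ n : ℕ, ‖T ^ n‖ ≤ M)
    (ω : ℕ → ℝ) (hanti : Antitone ω) (hpos : ∀ n, 0 < ω n)
    (hdom : ∀ n : ℕ, ‖T ^ n * (1 - T)‖ ≤ ω n)
    (lambda : ℂ) (hmod : ‖lambda‖ = 1) (hne : lambda ≠ 1)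
    (n : ℕ) (hn : ω n < ‖(1 : ℂ) - lambda‖) :
    lambda ∉ spectrum ℂ T ∧
      ‖(1 : ℂ) - lambda‖ * ‖resolvent T lambda‖ ≤
        ω n * ‖resolvent T lambda‖ + M * (1 + n * ‖(1 : ℂ) - lambda‖) := by
  have hM0 : 0 ≤ M := le_trans (norm_nonneg _) (hM 0)
  rcases subsingleton_or_nontrivial X with hX | hX
  · -- trivial space: everything is a unit, resolvent has norm 0
    have hsub : Subsingleton (X →L[ℂ] X) := ⟨fun f g => by ext x; exact Subsingleton.elim _ _⟩
    constructor
    · rw [spectrum.notMem_iff]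
      exact isUnit_of_subsingleton _
    · have hR : resolvent T lambda = 0 := Subsingleton.elim _ _
      rw [hR, norm_zero, mul_zero, mul_zero, zero_add]
      positivity
  -- nontrivial case
  have hspec : lambda ∉ spectrum ℂ T := by
    intro hmem
    have h1 := spectrum.subset_polynomial_aeval T
      (Polynomial.X ^ n * (1 - Polynomial.X) : Polynomial ℂ) ⟨lambda, hmem, rfl⟩
    have h2 : (Polynomial.aeval T (Polynomial.X ^ n * (1 - Polynomial.X) : Polynomial ℂ))
        = T ^ n * (1 - T) := by simp
    rw [h2] at h1
    have h3 := spectrum.norm_le_norm_of_mem h1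
    simp only [Polynomial.eval_mul, Polynomial.eval_pow, Polynomial.eval_X, Polynomial.eval_sub,
      Polynomial.eval_one, norm_mul, norm_pow, hmod, one_pow, one_mul] at h3
    exact absurd (h3.trans (hdom n)) (not_le.mpr hn)
  refine ⟨hspec, ?_⟩
  set μ : ℂ := 1 - lambda with hμdef
  have hu : IsUnit (algebraMap ℂ (X →L[ℂ] X) lambda - T) := spectrum.notMem_iff.mp hspec
  set R : X →L[ℂ] X := resolvent T lambda with hRdef
  have hRa : (algebraMap ℂ (X →L[ℂ] X) lambda - T) * R = 1 := Ring.mul_inverse_cancel _ hu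
  have halg : algebraMap ℂ (X →L[ℂ] X) lambda = lambda • (1 : X →L[ℂ] X) :=
    Algebra.algebraMap_eq_smul_one lambda
  set S : X →L[ℂ] X := ∑ i ∈ Finset.range n, lambda ^ i • T ^ (n - 1 - i) with hSdef
  -- Lemma A : S * a = lambda^n • 1 - T^n
  have hA : S * (algebraMap ℂ (X →L[ℂ] X) lambda - T)
      = lambda ^ n • (1 : X →L[ℂ] X) - T ^ n := by
    have hc : Commute (algebraMap ℂ (X →L[ℂ] X) lambda) T := Algebra.commutes' lambda T
    have h := hc.geom_sum₂_mul n
    convert h using 2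
    · apply Finset.sum_congr rfl
      intro i _
      rw [halg, smul_pow, one_pow, smul_mul_assoc, one_mul]
    · rw [halg, smul_pow, one_pow]
  have hTnR : T ^ n * R = lambda ^ n • R - S := by
    have h : S * ((algebraMap ℂ (X →L[ℂ] X) lambda - T) * R)
        = (lambda ^ n • (1 : X →L[ℂ] X) - T ^ n) * R := by rw [← mul_assoc, hA]
    rw [hRa, mul_one, sub_mul, smul_mul_assoc, one_mul] at h
    rw [h]; abel
  -- Lemma B : (1 - T) * R = μ • R + 1
  have hB : (1 - T) * R = μ • R + 1 := by
    have h1T : (1 : X →L[ℂ] X) - T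
        = μ • (1 : X →L[ℂ] X) + (algebraMap ℂ (X →L[ℂ] X) lambda - T) := by
      rw [halg, hμdef, sub_smul, one_smul]; abel
    rw [h1T, add_mul, smul_mul_assoc, one_mul, hRa]
  -- key identity
  have hkey : μ • (lambda ^ n • R) = T ^ n * (1 - T) * R + μ • S - T ^ n := by
    rw [mul_assoc, hB, mul_add, mul_one, mul_smul_comm, hTnR, smul_sub]
    abel
  -- norms
  have hnl : ‖μ • (lambda ^ n • R)‖ = ‖μ‖ * ‖R‖ := by
    rw [norm_smul μ (lambda ^ n • R), norm_smul (lambda ^ n) R, norm_pow, hmod, one_pow, one_mul]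
  have hSnorm : ‖S‖ ≤ n * M := by
    calc ‖S‖ ≤ ∑ i ∈ Finset.range n, ‖lambda ^ i • T ^ (n - 1 - i)‖ := norm_sum_le _ _
    _ ≤ ∑ _i ∈ Finset.range n, M := by
        apply Finset.sum_le_sum
        intro i _
        rw [norm_smul (lambda ^ i) (T ^ (n - 1 - i)), norm_pow, hmod, one_pow, one_mul]
        exact hM _
    _ = n * M := by rw [Finset.sum_const, Finset.card_range, nsmul_eq_mul]
  have hmain : ‖μ‖ * ‖R‖ ≤ ω n * ‖R‖ + ‖μ‖ * (n * M) + M := by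
    rw [← hnl, hkey]
    calc ‖T ^ n * (1 - T) * R + μ • S - T ^ n‖
        ≤ ‖T ^ n * (1 - T) * R + μ • S‖ + ‖T ^ n‖ := norm_sub_le _ _
      _ ≤ ‖T ^ n * (1 - T) * R‖ + ‖μ • S‖ + ‖T ^ n‖ := by
          gcongr; exact norm_add_le _ _
      _ ≤ ‖T ^ n * (1 - T)‖ * ‖R‖ + ‖μ‖ * ‖S‖ + M := by
          gcongr <;> first
            | exact norm_mul_le _ _
            | exact (norm_smul μ S).le
            | exact hM n
      _ ≤ ω n * ‖R‖ + ‖μ‖ * (n * M) + M := by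
          gcongr <;> first
            | exact hdom n
            | exact hSnorm
  nlinarith [norm_nonneg μ]
end

section
/- Let X be a complex Banach space, T a power-bounded operator with sup‖Tⁿ‖ = M, and suppose ω : ℕ → (0,∞) is decreasing with ‖Tⁿ(I−T)‖ ≤ ω(n) for all n and ω(n) → 0. Define ω*(s) = min{n : ω(n) ≤ s} for s > 0. Then for every b ∈ (0,1) and every λ ∈ 𝕋 \ {1}, ‖R(λ,T)‖ ≤ (M/(1−b)) · ( 1/|1−λ| + ω*(b|1−λ|) ). -/
open Finset

set_option maxHeartbeats 1600000 in
/-- If `ω` is a positive decreasing dominating function for the power-bounded operator `T`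
with `ω(n) → 0`, and `ω*(s) = min{n : ω(n) ≤ s}`, then for every `b ∈ (0,1)` and
`λ ∈ 𝕋 \ {1}`, `‖R(λ,T)‖ ≤ (M/(1−b))(1/|1−λ| + ω*(b|1−λ|))`. -/
theorem stmt_7 {X : Type*} [NormedAddCommGroup X] [NormedSpace ℂ X] [CompleteSpace X]
    (T : X →L[ℂ] X) (M : ℝ) (hM : ∀ n : ℕ, ‖T ^ n‖ ≤ M)
    (ω : ℕ → ℝ) (hanti : Antitone ω) (hpos : ∀ n, 0 < ω n)
    (hdom : ∀ n : ℕ, ‖T ^ n * (1 - T)‖ ≤ ω n)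
    (hlim : Filter.Tendsto ω Filter.atTop (nhds 0))
    (b : ℝ) (hb0 : 0 < b) (hb1 : b < 1)
    (lambda : ℂ) (hmod : ‖lambda‖ = 1) (hne : lambda ≠ 1) :
    ‖resolvent T lambda‖ ≤
      (M / (1 - b)) * (1 / ‖(1 : ℂ) - lambda‖ +
        (sInf {n : ℕ | ω n ≤ b * ‖(1 : ℂ) - lambda‖} : ℕ)) := by
  have hd : 0 < ‖(1:ℂ) - lambda‖ := by
    rw [norm_pos_iff, sub_ne_zero]
    exact fun h => hne h.symm
  have hM0 : 0 ≤ M := le_trans (norm_nonneg _) (hM 0)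
  have hb' : 0 < 1 - b := by linarith
  have hsne : {n : ℕ | ω n ≤ b * ‖(1:ℂ) - lambda‖}.Nonempty := by
    have : ∀ᶠ m in Filter.atTop, ω m < b * ‖(1:ℂ) - lambda‖ :=
      hlim.eventually (gt_mem_nhds (by positivity))
    obtain ⟨m, hm⟩ := this.exists
    exact ⟨m, hm.le⟩
  set n := sInf {n : ℕ | ω n ≤ b * ‖(1:ℂ) - lambda‖} with hn
  have hωn : ω n ≤ b * ‖(1:ℂ) - lambda‖ := Nat.sInf_mem hsne
  rw [resolvent]
  by_cases hU : IsUnit (algebraMap ℂ (X →L[ℂ] X) lambda - T)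
  swap
  · rw [Ring.inverse_non_unit _ hU, norm_zero]
    have h1 : 0 ≤ 1 / ‖(1:ℂ) - lambda‖ := by positivity
    have h2 : (0:ℝ) ≤ (n:ℝ) := Nat.cast_nonneg n
    apply mul_nonneg (div_nonneg hM0 hb'.le)
    linarith
  · set R := Ring.inverse (algebraMap ℂ (X →L[ℂ] X) lambda - T) with hR
    have hAR : (algebraMap ℂ (X →L[ℂ] X) lambda - T) * R = 1 :=
      Ring.mul_inverse_cancel _ hU
    set x : X →L[ℂ] X := lambda • 1 with hxdef
    have hx : algebraMap ℂ (X →L[ℂ] X) lambda = x := Algebra.algebraMap_eq_smul_one lambda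
    rw [hx] at hAR
    set S : X →L[ℂ] X := ∑ i ∈ range n, x ^ i * T ^ (n - 1 - i) with hSdef
    have hcomm : Commute x T := (Commute.one_left T).smul_left lambda
    have hgeom : S * (x - T) = x ^ n - T ^ n := hcomm.geom_sum₂_mul n
    -- identity 2 : x^n * R = S + T^n * R
    have h2 : x ^ n * R = S + T ^ n * R := by
      have hxs : x ^ n = S * (x - T) + T ^ n := by rw [hgeom]; abel
      rw [hxs, add_mul, mul_assoc, hAR, mul_one]
    -- identity 3 : (lambda - 1) • R = 1 - (1 - T) * R
    have h3 : (lambda - 1) • R = 1 - (1 - T) * R := by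
      have hsplit : x - T = (lambda - 1) • (1 : X →L[ℂ] X) + (1 - T) := by
        rw [hxdef, sub_smul, one_smul]; abel
      have h := hAR
      rw [hsplit, add_mul, smul_mul_assoc, one_mul] at h
      linear_combination (norm := abel) h
    -- identity 4
    have h4 : (lambda - 1) • (T ^ n * R) = T ^ n - T ^ n * (1 - T) * R := by
      rw [← mul_smul_comm, h3, mul_sub, mul_one, ← mul_assoc]
    have h5 : (lambda - 1) • (x ^ n * R)
        = (lambda - 1) • S + (T ^ n - T ^ n * (1 - T) * R) := by
      rw [h2, smul_add, h4]
    -- x^n * R = lambda^n • R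
    have hxn : x ^ n * R = lambda ^ n • R := by
      rw [hxdef, smul_pow, one_pow, smul_mul_assoc, one_mul]
    -- norm computations
    have hLHS : ‖(lambda - 1) • (x ^ n * R)‖ = ‖(1:ℂ) - lambda‖ * ‖R‖ := by
      have e1 : ‖(lambda - 1) • (lambda ^ n • R)‖ = ‖lambda - 1‖ * ‖lambda ^ n • R‖ :=
        norm_smul (lambda - 1) (lambda ^ n • R)
      have e2 : ‖lambda ^ n • R‖ = ‖lambda ^ n‖ * ‖R‖ := norm_smul (lambda ^ n) R
      rw [hxn, e1, e2, norm_pow, hmod, one_pow, one_mul, norm_sub_rev]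
    have hS : ‖S‖ ≤ (n : ℝ) * M := by
      calc ‖S‖ ≤ ∑ i ∈ range n, ‖x ^ i * T ^ (n - 1 - i)‖ := norm_sum_le _ _
        _ ≤ ∑ _i ∈ range n, M := by
            apply Finset.sum_le_sum
            intro i _
            have e : x ^ i * T ^ (n - 1 - i) = lambda ^ i • T ^ (n - 1 - i) := by
              rw [hxdef, smul_pow, one_pow, smul_mul_assoc, one_mul]
            have e2 : ‖lambda ^ i • T ^ (n - 1 - i)‖ = ‖lambda ^ i‖ * ‖T ^ (n - 1 - i)‖ :=
              norm_smul (lambda ^ i) (T ^ (n - 1 - i))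
            rw [e, e2, norm_pow, hmod, one_pow, one_mul]
            exact hM _
        _ = (n : ℝ) * M := by simp [Finset.sum_const, nsmul_eq_mul]
    have hkey : ‖(1:ℂ) - lambda‖ * ‖R‖ ≤
        ‖(1:ℂ) - lambda‖ * ((n : ℝ) * M) + M + ω n * ‖R‖ := by
      calc ‖(1:ℂ) - lambda‖ * ‖R‖ = ‖(lambda - 1) • (x ^ n * R)‖ := hLHS.symm
        _ = ‖(lambda - 1) • S + (T ^ n - T ^ n * (1 - T) * R)‖ := by rw [h5]
        _ ≤ ‖(lambda - 1) • S‖ + ‖T ^ n - T ^ n * (1 - T) * R‖ := norm_add_le _ _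
        _ ≤ ‖(lambda - 1) • S‖ + (‖T ^ n‖ + ‖T ^ n * (1 - T) * R‖) := by
            gcongr; exact norm_sub_le _ _
        _ ≤ ‖(1:ℂ) - lambda‖ * ((n : ℝ) * M) + (M + ω n * ‖R‖) := by
            gcongr ?_ + (?_ + ?_)
            · have e : ‖(lambda - 1) • S‖ = ‖lambda - 1‖ * ‖S‖ := norm_smul (lambda - 1) S
              rw [e, norm_sub_rev]
              exact mul_le_mul_of_nonneg_left hS (norm_nonneg _)
            · exact hM n
            · calc ‖T ^ n * (1 - T) * R‖ ≤ ‖T ^ n * (1 - T)‖ * ‖R‖ := norm_mul_le _ _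
                _ ≤ ω n * ‖R‖ := by gcongr; exact hdom n
        _ = _ := by ring
    -- conclude
    set d := ‖(1:ℂ) - lambda‖
    set r := ‖R‖
    have hr0 : 0 ≤ r := norm_nonneg _
    have hfinal : d * r ≤ d * ((n:ℝ) * M) + M + b * d * r := by
      have hh : ω n * r ≤ b * d * r := by
        apply mul_le_mul_of_nonneg_right hωn hr0
      linarith
    rw [div_mul_eq_mul_div, le_div_iff₀ hb']
    have hdr : (1 - b) * (d * r) ≤ d * ((n:ℝ) * M) + M := by nlinarith
    have h1d : 1 / d * d = 1 := by field_simp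
    nlinarith [mul_le_mul_of_nonneg_left hdr (le_of_lt (one_div_pos.mpr hd)), hd,
      mul_nonneg hd.le hr0]
end

section
/- Let X = ℓ^p (1 ≤ p ≤ ∞), S the left-shift operator (Sx)_k = x_{k+1}, and T = (1/4)(I+S)². Then ‖T‖ = 1 and the spectrum of T equals {r e^{iθ} : −π < θ ≤ π, 0 ≤ r ≤ (1+cos θ)/2}; in particular σ(T) ∩ 𝕋 = {1}. -/
/-!
Every geometric sequence `(μ ^ k)` with `‖μ‖ < 1` is an eigenvector of the shift, and `‖S‖ ≤ 1`;
as the spectrum is closed, `σ(S)` is the closed unit disc. By spectral mapping, `σ(T)` is the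
image of the disc under `z ↦ ((1 + z) / 2) ^ 2`. The disc `‖2u - 1‖ ≤ 1` is `‖u‖² ≤ Re u`, i.e.
`u = s e^{iφ}` with `s ≤ cos φ`, and squaring turns this into the cardioid
`r ≤ cos² (θ / 2) = (1 + cos θ) / 2`, which meets the unit circle only at `1`.
Finally `‖T‖ ≤ (‖1 + S‖ / 2)² ≤ 1`, and `1 ∈ σ(T)` gives `‖T‖ ≥ 1`.
-/

open Complex Metric Set Polynomial

namespace lp

variable {ι E : Type*} [NormedAddCommGroup E] {p : ENNReal}

theorem norm_le_norm_of_injective_reindex (hp : p ≠ 0) {x y : lp (fun _ : ι => E) p}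
    {f : ι → ι} (hf : f.Injective) (hy : ∀ i, y i = x (f i)) : ‖y‖ ≤ ‖x‖ := by
  rcases p.trichotomy with rfl | rfl | hp'
  · exact absurd rfl hp
  · exact lp.norm_le_of_forall_le (norm_nonneg' x) fun i =>
      hy i ▸ lp.norm_apply_le_norm ENNReal.top_ne_zero x (f i)
  · refine lp.norm_le_of_tsum_le hp' (norm_nonneg' x) ?_
    rw [lp.norm_rpow_eq_tsum hp' x]
    simp_rw [hy]
    exact tsum_comp_le_tsum_of_inj ((lp.memℓp x).summable hp') (fun _ => by positivity) hf

instance [Nonempty ι] [Nontrivial E] : Nontrivial (lp (fun _ : ι => E) p) := by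
  classical
  obtain ⟨e, he⟩ := exists_ne (0 : E)
  obtain ⟨i⟩ := ‹Nonempty ι›
  refine ⟨lp.single p i e, 0, fun h => he ?_⟩
  simpa using congr_arg (fun x : lp (fun _ : ι => E) p => x i) h

end lp

theorem mem_spectrum_of_apply_eq_smul {𝕜 M : Type*} [NormedField 𝕜] [NormedAddCommGroup M]
    [NormedSpace 𝕜 M] {a : M →L[𝕜] M} {μ : 𝕜} {v : M} (hv : v ≠ 0) (h : a v = μ • v) :
    μ ∈ spectrum 𝕜 a := by
  rw [spectrum.mem_iff]
  intro hunit
  exact hv <| (ContinuousLinearMap.isHomeomorph_of_isUnit hunit).injective <| by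
    simp [h, Algebra.algebraMap_eq_smul_one]

section Shift

variable {𝕜 : Type*} {p : ENNReal} [Fact (1 ≤ p)]

theorem opNorm_shift_le_one [NontriviallyNormedField 𝕜] {E : Type*} [NormedAddCommGroup E]
    [NormedSpace 𝕜 E]
    {S : lp (fun _ : ℕ => E) p →L[𝕜] lp (fun _ : ℕ => E) p}
    (hS : ∀ x k, S x k = x (k + 1)) : ‖S‖ ≤ 1 :=
  S.opNorm_le_bound zero_le_one fun x => (one_mul ‖x‖).symm ▸
    lp.norm_le_norm_of_injective_reindex (zero_lt_one.trans_le Fact.out).ne'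
      (add_left_injective 1) (hS x)

theorem memℓp_geometric [NormedField 𝕜] {μ : 𝕜} (hμ : ‖μ‖ < 1) :
    Memℓp (fun k : ℕ => μ ^ k) p :=
  Memℓp.of_exponent_ge (p := p) (q := 1)
    (memℓp_gen (by simpa using summable_geometric_of_lt_one (norm_nonneg μ) hμ)) Fact.out

theorem ball_subset_spectrum_shift [NormedField 𝕜]
    {S : lp (fun _ : ℕ => 𝕜) p →L[𝕜] lp (fun _ : ℕ => 𝕜) p}
    (hS : ∀ x k, S x k = x (k + 1)) : ball 0 1 ⊆ spectrum 𝕜 S := by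
  intro μ hμ
  rw [mem_ball_zero_iff] at hμ
  let v : lp (fun _ : ℕ => 𝕜) p := ⟨fun k => μ ^ k, memℓp_geometric hμ⟩
  refine mem_spectrum_of_apply_eq_smul (v := v) (fun h => ?_) (lp.ext <| funext fun k => ?_)
  · simpa [v] using congr_arg (fun x : lp (fun _ : ℕ => 𝕜) p => x 0) h
  · simp [hS, v, pow_succ']

theorem spectrum_shift_eq_closedBall [RCLike 𝕜]
    {S : lp (fun _ : ℕ => 𝕜) p →L[𝕜] lp (fun _ : ℕ => 𝕜) p}
    (hS : ∀ x k, S x k = x (k + 1)) : spectrum 𝕜 S = closedBall 0 1 := by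
  refine (spectrum.subset_closedBall_norm S).trans (closedBall_subset_closedBall
    (opNorm_shift_le_one hS)) |>.antisymm ?_
  rw [← closure_ball (0 : 𝕜) one_ne_zero]
  exact (spectrum.isClosed S).closure_subset_iff.2 (ball_subset_spectrum_shift hS)

end Shift

namespace Complex

def cardioid : Set ℂ :=
  {z : ℂ | ∃ r θ : ℝ, -Real.pi < θ ∧ θ ≤ Real.pi ∧ 0 ≤ r ∧
    r ≤ (1 + Real.cos θ) / 2 ∧ z = r * Complex.exp (θ * Complex.I)}

theorem norm_two_mul_sub_one_le_one_iff {u : ℂ} : ‖2 * u - 1‖ ≤ 1 ↔ normSq u ≤ u.re := by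
  rw [← sq_le_one_iff₀ (norm_nonneg _), Complex.sq_norm]
  simp only [normSq_apply, sub_re, sub_im, mul_re, mul_im, re_ofNat, im_ofNat, one_re, one_im]
  constructor <;> intro h <;> nlinarith

theorem sq_mem_cardioid {u : ℂ} (hu : normSq u ≤ u.re) : u ^ 2 ∈ cardioid := by
  have harg : |arg u| < Real.pi / 2 := by
    refine abs_arg_lt_pi_div_two_iff.2 ((eq_or_ne u 0).symm.imp (fun h => ?_) id)
    exact (normSq_pos.2 h).trans_le hu
  have hnorm : ‖u‖ ^ 2 ≤ ‖u‖ * Real.cos (arg u) := by rwa [norm_mul_cos_arg, Complex.sq_norm]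
  refine ⟨‖u‖ ^ 2, 2 * arg u, by linarith [neg_abs_le (arg u)], by linarith [le_abs_self (arg u)],
    by positivity, ?_, ?_⟩
  · rw [Real.cos_two_mul]
    nlinarith [norm_nonneg u]
  · conv_lhs => rw [← norm_mul_exp_arg_mul_I u]
    rw [mul_pow, ← exp_nat_mul]
    push_cast
    ring_nf

theorem exists_sq_eq_of_mem_cardioid {z : ℂ} (hz : z ∈ cardioid) :
    ∃ u : ℂ, normSq u ≤ u.re ∧ u ^ 2 = z := by
  obtain ⟨r, θ, hθl, hθr, hr, hrθ, rfl⟩ := hz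
  have hsqrt : √r ≤ Real.cos (θ / 2) := by
    rw [Real.cos_half hθl.le hθr]
    exact Real.sqrt_le_sqrt hrθ
  refine ⟨√r * exp ((θ / 2 : ℝ) * I), ?_, ?_⟩
  · rw [normSq_mul, normSq_ofReal, Real.mul_self_sqrt hr, ← Complex.sq_norm,
      norm_exp_ofReal_mul_I, re_ofReal_mul, exp_ofReal_mul_I_re]
    nlinarith [Real.mul_self_sqrt hr, Real.sqrt_nonneg r]
  · rw [mul_pow, ← ofReal_pow, Real.sq_sqrt hr, ← exp_nat_mul]
    push_cast
    ring_nf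

theorem image_closedBall_eq_cardioid :
    (fun z : ℂ => 4⁻¹ * (1 + z) ^ 2) '' closedBall 0 1 = cardioid := by
  ext w
  constructor
  · rintro ⟨z, hz, rfl⟩
    have hu : normSq ((1 + z) / 2) ≤ ((1 + z) / 2).re := by
      rw [← norm_two_mul_sub_one_le_one_iff]
      simpa [mul_div_cancel₀] using hz
    convert sq_mem_cardioid hu using 1
    ring
  · intro hw
    obtain ⟨u, hu, rfl⟩ := exists_sq_eq_of_mem_cardioid hw
    refine ⟨2 * u - 1, by simpa using norm_two_mul_sub_one_le_one_iff.2 hu, by ring⟩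

theorem one_mem_cardioid : (1 : ℂ) ∈ cardioid := by
  simpa using sq_mem_cardioid (u := 1) (by simp)

theorem cardioid_inter_unit_circle : cardioid ∩ {z : ℂ | ‖z‖ = 1} = {1} := by
  refine subset_antisymm ?_ (singleton_subset_iff.2 ⟨one_mem_cardioid, by simp⟩)
  rintro _ ⟨⟨r, θ, hθl, hθr, hr, hrθ, rfl⟩, hnorm⟩
  rw [mem_ofPred_eq, norm_mul, norm_real, norm_exp_ofReal_mul_I, mul_one, Real.norm_of_nonneg hr]
    at hnorm
  subst hnorm
  have hθ : θ = 0 := (Real.cos_eq_one_iff_of_lt_of_lt (by linarith) (by linarith)).1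
    (by linarith [Real.cos_le_one θ])
  simp [hθ]

end Complex

theorem norm_inv_four_smul_one_add_sq_le_one {𝕜 A : Type*} [RCLike 𝕜] [NormedRing A]
    [NormedAlgebra 𝕜 A] [NormOneClass A] {a : A} (ha : ‖a‖ ≤ 1) :
    ‖(4 : 𝕜)⁻¹ • (1 + a) ^ 2‖ ≤ 1 := by
  have h : ‖1 + a‖ ≤ 2 := (norm_add_le 1 a).trans (by rw [norm_one]; linarith)
  calc ‖(4 : 𝕜)⁻¹ • (1 + a) ^ 2‖ ≤ 4⁻¹ * ‖1 + a‖ ^ 2 := by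
        rw [norm_smul, norm_inv, RCLike.norm_ofNat]
        gcongr
        exact norm_pow_le _ 2
    _ ≤ 4⁻¹ * 2 ^ 2 := by gcongr
    _ = 1 := by norm_num

/-- For the left shift `S` on `ℓ^p` (`1 ≤ p ≤ ∞`) and `T = (1/4)(I+S)²`, one has `‖T‖ = 1`,
`σ(T) = {r e^{iθ} : −π < θ ≤ π, 0 ≤ r ≤ (1+cos θ)/2}` and `σ(T) ∩ 𝕋 = {1}`. -/
theorem stmt_15 (p : ENNReal) [Fact (1 ≤ p)]
    (S : lp (fun _ : ℕ => ℂ) p →L[ℂ] lp (fun _ : ℕ => ℂ) p)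
    (hS : ∀ x : lp (fun _ : ℕ => ℂ) p, ∀ k : ℕ, (S x : ℕ → ℂ) k = x (k + 1)) :
    ‖(4 : ℂ)⁻¹ • (1 + S) ^ 2‖ = 1 ∧
      spectrum ℂ ((4 : ℂ)⁻¹ • (1 + S) ^ 2) =
        {z : ℂ | ∃ r θ : ℝ, -Real.pi < θ ∧ θ ≤ Real.pi ∧ 0 ≤ r ∧
          r ≤ (1 + Real.cos θ) / 2 ∧ z = r * Complex.exp (θ * Complex.I)} ∧
      spectrum ℂ ((4 : ℂ)⁻¹ • (1 + S) ^ 2) ∩ {z : ℂ | ‖z‖ = 1} = {1} := by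
  set T := (4 : ℂ)⁻¹ • (1 + S) ^ 2
  have hT : T = aeval S (C (4 : ℂ)⁻¹ * (1 + X) ^ 2) := by simp [T, Algebra.smul_def]
  have hspec : spectrum ℂ T = cardioid := by
    rw [hT, spectrum.map_polynomial_aeval, spectrum_shift_eq_closedBall hS,
      ← image_closedBall_eq_cardioid]
    simp
  refine ⟨le_antisymm (norm_inv_four_smul_one_add_sq_le_one (opNorm_shift_le_one hS)) ?_, hspec,
    hspec ▸ cardioid_inter_unit_circle⟩
  have h1 : (1 : ℂ) ∈ spectrum ℂ T := hspec ▸ one_mem_cardioid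
  simpa using spectrum.norm_le_norm_of_mem h1
end

section
/- Let X be a complex Banach space and T a power-bounded operator with σ(T) ∩ 𝕋 = {1} and ‖R(e^{iθ},T)‖ = O(|θ|^{-n}) as θ → 0 for some positive integer n. Then sup{‖(I−T)ⁿ R(λ,T)‖ : |λ| > 1} < ∞. -/
open Complex

namespace Stmt16Helper

set_option linter.unusedVariables false
set_option linter.unusedSectionVars false

lemma exp_dist (θ : ℝ) : ‖Complex.exp (θ * Complex.I) - 1‖ ≤ |θ| := by
  have h : Complex.exp (θ * Complex.I) - 1
      = Complex.ofReal (Real.cos θ - 1) + Complex.ofReal (Real.sin θ) * Complex.I := by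
    rw [Complex.exp_mul_I, ← Complex.ofReal_cos, ← Complex.ofReal_sin]
    push_cast
    ring
  rw [h, Complex.norm_def, Complex.normSq_add_mul_I]
  have h1 : (Real.cos θ - 1) ^ 2 + Real.sin θ ^ 2 = 2 - 2 * Real.cos θ := by
    have := Real.sin_sq_add_cos_sq θ; nlinarith
  have h2 : 2 - 2 * Real.cos θ ≤ θ ^ 2 := by
    have := Real.one_sub_sq_div_two_le_cos (x := θ); nlinarith
  calc Real.sqrt ((Real.cos θ - 1) ^ 2 + Real.sin θ ^ 2) ≤ Real.sqrt (θ ^ 2) := by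
        rw [h1]; exact Real.sqrt_le_sqrt h2
    _ = |θ| := Real.sqrt_sq_eq_abs θ

lemma exp_ne_one {θ : ℝ} (h0 : θ ≠ 0) (hpi : |θ| ≤ Real.pi) :
    Complex.exp (θ * Complex.I) ≠ 1 := by
  intro h
  rw [Complex.exp_eq_one_iff] at h
  obtain ⟨k, hk⟩ := h
  have hk' : (θ : ℂ) * I = ((k * (2 * Real.pi) : ℝ) : ℂ) * I := by
    rw [hk]; push_cast; ring
  have hθ : θ = k * (2 * Real.pi) := by
    have := mul_right_cancel₀ Complex.I_ne_zero hk'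
    exact_mod_cast this
  have hpi0 := Real.pi_pos
  rcases lt_trichotomy k 0 with hkneg | hk0 | hkpos
  · have : (k : ℝ) ≤ -1 := by exact_mod_cast Int.le_sub_one_of_lt hkneg
    nlinarith [abs_le.mp hpi]
  · apply h0; rw [hθ, hk0]; push_cast; ring
  · have : (1 : ℝ) ≤ (k : ℝ) := by exact_mod_cast hkpos
    nlinarith [abs_le.mp hpi]

variable {X : Type*} [NormedAddCommGroup X] [NormedSpace ℂ X] [CompleteSpace X]

lemma neumann (T : X →L[ℂ] X) (M : ℝ) (hM : ∀ m : ℕ, ‖T ^ m‖ ≤ M)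
    (lam : ℂ) (hlam : 1 < ‖lam‖) :
    lam ∈ resolventSet ℂ T ∧ ‖resolvent T lam‖ ≤ M / (‖lam‖ - 1) := by
  have hM0 : (0:ℝ) ≤ M := (norm_nonneg _).trans (hM 0)
  have hlam0 : lam ≠ 0 := by
    intro h; rw [h, norm_zero] at hlam; linarith
  set r : ℝ := ‖lam‖⁻¹ with hr_def
  have hr0 : 0 ≤ r := inv_nonneg.mpr (norm_nonneg _)
  have hr1 : r < 1 := by
    rw [hr_def, inv_lt_one_iff₀]; right; exact hlam
  set t : X →L[ℂ] X := lam⁻¹ • T with ht_def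
  have hnorm : ∀ m : ℕ, ‖t ^ m‖ ≤ M * r ^ m := by
    intro m
    rw [ht_def, smul_pow]
    rw [norm_smul (lam⁻¹ ^ m) (T ^ m), norm_pow, norm_inv, mul_comm]
    exact mul_le_mul (hM m) le_rfl (by positivity) hM0
  have hsumnorm : Summable (fun m : ℕ => ‖t ^ m‖) :=
    Summable.of_nonneg_of_le (fun m => norm_nonneg _) hnorm
      ((summable_geometric_of_lt_one hr0 hr1).mul_left M)
  have hsum : Summable (fun m : ℕ => t ^ m) := Summable.of_norm hsumnorm
  set s : X →L[ℂ] X := ∑' m : ℕ, t ^ m with hs_def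
  have htail : ∑' m : ℕ, t ^ (m + 1) = s - 1 := by
    have := Summable.tsum_eq_zero_add hsum
    rw [pow_zero] at this
    rw [← hs_def] at this
    -- this : s = 1 + ∑' m, t ^ (m+1)
    rw [this]; abel
  have hts : t * s = s - 1 := by
    rw [hs_def, ← Summable.tsum_mul_left t hsum, ← htail]
    exact tsum_congr fun m => (pow_succ' t m).symm
  have hst : s * t = s - 1 := by
    rw [hs_def, ← Summable.tsum_mul_right t hsum, ← htail]
    exact tsum_congr fun m => (pow_succ t m).symm
  have h1 : (1 - t) * s = 1 := by rw [sub_mul, one_mul, hts]; abel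
  have h2 : s * (1 - t) = 1 := by rw [mul_sub, mul_one, hst]; abel
  have hTt : lam • t = T := by rw [ht_def, smul_smul, mul_inv_cancel₀ hlam0, one_smul]
  have heq : (algebraMap ℂ (X →L[ℂ] X)) lam - T = lam • (1 - t) := by
    rw [smul_sub, hTt, Algebra.algebraMap_eq_smul_one]
  have hval_inv : ((algebraMap ℂ (X →L[ℂ] X)) lam - T) * (lam⁻¹ • s) = 1 := by
    rw [heq, smul_mul_assoc, mul_smul_comm, smul_smul, mul_inv_cancel₀ hlam0, one_smul, h1]
  have hinv_val : (lam⁻¹ • s) * ((algebraMap ℂ (X →L[ℂ] X)) lam - T) = 1 := by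
    rw [heq, smul_mul_assoc, mul_smul_comm, smul_smul, inv_mul_cancel₀ hlam0, one_smul, h2]
  have hmem : lam ∈ resolventSet ℂ T :=
    spectrum.mem_resolventSet_of_left_right_inverse hval_inv hinv_val
  refine ⟨hmem, ?_⟩
  have hres : resolvent T lam = lam⁻¹ • s := by
    have hu : IsUnit ((algebraMap ℂ (X →L[ℂ] X)) lam - T) := hmem
    calc resolvent T lam
        = resolvent T lam * (((algebraMap ℂ (X →L[ℂ] X)) lam - T) * (lam⁻¹ • s)) := by
          rw [hval_inv, mul_one]
      _ = (Ring.inverse ((algebraMap ℂ (X →L[ℂ] X)) lam - T)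
            * ((algebraMap ℂ (X →L[ℂ] X)) lam - T)) * (lam⁻¹ • s) := by
          rw [resolvent, mul_assoc]
      _ = lam⁻¹ • s := by rw [Ring.inverse_mul_cancel _ hu, one_mul]
  have hsnorm : ‖s‖ ≤ M * (1 - r)⁻¹ := by
    calc ‖s‖ ≤ ∑' m : ℕ, ‖t ^ m‖ := norm_tsum_le_tsum_norm hsumnorm
      _ ≤ ∑' m : ℕ, M * r ^ m :=
          Summable.tsum_le_tsum hnorm hsumnorm ((summable_geometric_of_lt_one hr0 hr1).mul_left M)
      _ = M * (1 - r)⁻¹ := by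
          rw [tsum_mul_left, tsum_geometric_of_lt_one hr0 hr1]
  rw [hres, norm_smul (lam⁻¹) s, norm_inv]
  have hkey : ‖lam‖⁻¹ * (M * (1 - r)⁻¹) = M / (‖lam‖ - 1) := by
    rw [hr_def]
    have h0 : ‖lam‖ ≠ 0 := by positivity
    have h1 : ‖lam‖ - 1 ≠ 0 := by intro h; rw [sub_eq_zero] at h; rw [← h] at hlam; linarith
    have h2' : (1 - ‖lam‖⁻¹) = (‖lam‖ - 1) / ‖lam‖ := by
      rw [sub_div, div_self h0, one_div]
    rw [h2', inv_div]
    calc ‖lam‖⁻¹ * (M * (‖lam‖ / (‖lam‖ - 1)))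
        = (‖lam‖⁻¹ * ‖lam‖) * (M / (‖lam‖ - 1)) := by ring
      _ = M / (‖lam‖ - 1) := by rw [inv_mul_cancel₀ h0, one_mul]
  calc ‖lam‖⁻¹ * ‖s‖ ≤ ‖lam‖⁻¹ * (M * (1 - r)⁻¹) := by
        apply mul_le_mul_of_nonneg_left hsnorm (by positivity)
    _ = M / (‖lam‖ - 1) := hkey

lemma res_ident (T : X →L[ℂ] X) {lam mu : ℂ} (hl : lam ∈ resolventSet ℂ T)
    (hmu : mu ∈ resolventSet ℂ T) :
    ‖resolvent T lam‖ ≤ ‖resolvent T mu‖ * (1 + ‖mu - lam‖ * ‖resolvent T lam‖) := by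
  set Al := (algebraMap ℂ (X →L[ℂ] X)) lam - T with hAl
  set Am := (algebraMap ℂ (X →L[ℂ] X)) mu - T with hAm
  have hul : IsUnit Al := hl
  have hum : IsUnit Am := hmu
  have h1 : resolvent T mu * Am = 1 := Ring.inverse_mul_cancel _ hum
  have h2 : Al * resolvent T lam = 1 := Ring.mul_inverse_cancel _ hul
  have hAmAl : Am = Al + (mu - lam) • (1 : X →L[ℂ] X) := by
    rw [hAm, hAl, Algebra.algebraMap_eq_smul_one, Algebra.algebraMap_eq_smul_one, sub_smul]
    abel
  have key : resolvent T lam = resolvent T mu + (mu - lam) • (resolvent T mu * resolvent T lam) := by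
    calc resolvent T lam = (resolvent T mu * Am) * resolvent T lam := by rw [h1, one_mul]
      _ = resolvent T mu * (Al * resolvent T lam)
            + (mu - lam) • (resolvent T mu * resolvent T lam) := by
          rw [hAmAl]; simp only [add_mul, mul_add, smul_mul_assoc, mul_smul_comm, one_mul,
            mul_one]
          rw [mul_assoc]
      _ = resolvent T mu + (mu - lam) • (resolvent T mu * resolvent T lam) := by
          rw [h2, mul_one]
  have hb := norm_add_le (resolvent T mu) ((mu - lam) • (resolvent T mu * resolvent T lam))
  rw [← key] at hb
  refine hb.trans ?_
  have h3 : ‖(mu - lam) • (resolvent T mu * resolvent T lam)‖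
      ≤ ‖mu - lam‖ * (‖resolvent T mu‖ * ‖resolvent T lam‖) := by
    rw [norm_smul (mu - lam) (resolvent T mu * resolvent T lam)]
    exact mul_le_mul_of_nonneg_left (norm_mul_le _ _) (norm_nonneg _)
  have : ‖resolvent T mu‖ + ‖mu - lam‖ * (‖resolvent T mu‖ * ‖resolvent T lam‖)
      = ‖resolvent T mu‖ * (1 + ‖mu - lam‖ * ‖resolvent T lam‖) := by ring
  linarith

lemma key_est (T : X →L[ℂ] X) (M' : ℝ) (hM'1 : 1 ≤ M') (hM' : ∀ m : ℕ, ‖T ^ m‖ ≤ M')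
    (hsp : spectrum ℂ T ∩ {z : ℂ | ‖z‖ = 1} = {1})
    (n : ℕ) (hn : 1 ≤ n)
    (C δ K0 : ℝ) (hC : 0 < C) (hδ : 0 < δ) (hK0 : 0 ≤ K0)
    (hO : ∀ θ : ℝ, 0 < |θ| → |θ| < δ →
      ‖resolvent T (Complex.exp (θ * Complex.I))‖ ≤ C / |θ| ^ n)
    (hArc : ∀ θ : ℝ, θ ≠ 0 → |θ| ≤ Real.pi → δ ≤ |θ| →
      ‖resolvent T (Complex.exp (θ * Complex.I))‖ ≤ K0)
    (lam : ℂ) (h1 : 1 < ‖lam‖) (h2 : ‖lam‖ < 2) :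
    ‖1 - lam‖ ^ n * ‖resolvent T lam‖
      ≤ 2 ^ n * (1 + M') * C + 2 ^ n * M' + M' + 3 ^ n * (1 + M') * K0 := by
  have hM'0 : (0:ℝ) ≤ M' := by linarith
  obtain ⟨hmem, hRle⟩ := neumann T M' hM' lam h1
  set b : ℝ := ‖lam‖ - 1 with hb_def
  have hb0 : 0 < b := by simp only [hb_def]; linarith
  have hb1 : b < 1 := by simp only [hb_def]; linarith
  set θ := Complex.arg lam with hθ_def
  set mu := Complex.exp (θ * Complex.I) with hmu_def
  have hlam_eq : lam = ((‖lam‖ : ℝ) : ℂ) * mu := by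
    rw [hmu_def, hθ_def]
    exact (Complex.norm_mul_exp_arg_mul_I lam).symm
  have hmunorm : ‖mu‖ = 1 := by
    rw [hmu_def, Complex.norm_exp_ofReal_mul_I]
  have hmulam : ‖mu - lam‖ = b := by
    have h : mu - lam = ((1 - ‖lam‖ : ℝ) : ℂ) * mu := by
      conv_lhs => rw [hlam_eq]
      push_cast; ring
    rw [h, norm_mul, hmunorm, mul_one, Complex.norm_real, Real.norm_eq_abs,
      abs_of_nonpos (by linarith), hb_def]
    ring
  have hRnn : (0:ℝ) ≤ ‖resolvent T lam‖ := norm_nonneg _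
  have hRleb : ‖resolvent T lam‖ ≤ M' / b := hRle
  -- positivity of the three "other" summands
  have hpos1 : (0:ℝ) ≤ 2 ^ n * (1 + M') * C := by positivity
  have hpos2 : (0:ℝ) ≤ 2 ^ n * M' := by positivity
  have hpos3 : (0:ℝ) ≤ 3 ^ n * (1 + M') * K0 := by positivity
  have hpow_b : b ^ n * (M' / b) ≤ M' := by
    obtain ⟨m, hm⟩ : ∃ m, n = m + 1 := ⟨n - 1, (Nat.succ_pred_eq_of_pos hn).symm⟩
    rw [hm, pow_succ, mul_assoc, mul_comm b (M'/b), div_mul_cancel₀ M' hb0.ne']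
    calc b ^ m * M' ≤ 1 * M' :=
          mul_le_mul_of_nonneg_right (pow_le_one₀ hb0.le hb1.le) hM'0
      _ = M' := one_mul M'
  by_cases hθ0 : θ = 0
  · -- lam is a positive real
    have hmu1 : mu = 1 := by rw [hmu_def, hθ0]; simp
    have h1lam : ‖1 - lam‖ = b := by rw [← hmu1, hmulam]
    have : ‖1 - lam‖ ^ n * ‖resolvent T lam‖ ≤ b ^ n * (M' / b) := by
      rw [h1lam]
      exact mul_le_mul_of_nonneg_left hRleb (by positivity)
    linarith [hpow_b]
  · have hμ1 : mu ≠ 1 := exp_ne_one hθ0 (Complex.abs_arg_le_pi lam)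
    have hμmem : mu ∈ resolventSet ℂ T := by
      have hns : mu ∉ spectrum ℂ T := by
        intro h
        exact hμ1 (by
          have hmem' : mu ∈ spectrum ℂ T ∩ {z : ℂ | ‖z‖ = 1} := ⟨h, hmunorm⟩
          rw [hsp] at hmem'
          exact hmem')
      exact spectrum.notMem_iff.mp hns
    have hid := res_ident T hmem hμmem
    have hmuRnn : (0:ℝ) ≤ ‖resolvent T mu‖ := norm_nonneg _
    have hsmall : ‖mu - lam‖ * ‖resolvent T lam‖ ≤ M' := by
      rw [hmulam]
      calc b * ‖resolvent T lam‖ ≤ b * (M' / b) :=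
            mul_le_mul_of_nonneg_left hRleb hb0.le
        _ = M' := by rw [mul_comm, div_mul_cancel₀ M' hb0.ne']
    have hRlam_le : ‖resolvent T lam‖ ≤ ‖resolvent T mu‖ * (1 + M') := by
      refine hid.trans ?_
      exact mul_le_mul_of_nonneg_left (by linarith) hmuRnn
    have h1lam : ‖1 - lam‖ ≤ |θ| + b := by
      calc ‖1 - lam‖ = ‖(1 - mu) + (mu - lam)‖ := by congr 1; ring
        _ ≤ ‖1 - mu‖ + ‖mu - lam‖ := norm_add_le _ _
        _ ≤ |θ| + b := by
            rw [hmulam]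
            have : ‖1 - mu‖ ≤ |θ| := by rw [norm_sub_rev]; exact exp_dist θ
            linarith
    by_cases hθδ : |θ| < δ
    · have hRmu := hO θ (abs_pos.mpr hθ0) hθδ
      set a : ℝ := |θ| with ha_def
      have ha0 : 0 < a := abs_pos.mpr hθ0
      have hRlam2 : ‖resolvent T lam‖ ≤ C / a ^ n * (1 + M') := by
        refine hRlam_le.trans ?_
        exact mul_le_mul_of_nonneg_right hRmu (by linarith)
      by_cases hba : b ≤ a
      · have hlt : ‖1 - lam‖ ^ n ≤ (2 * a) ^ n := by
          exact pow_le_pow_left₀ (norm_nonneg _) (by linarith) n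
        have : ‖1 - lam‖ ^ n * ‖resolvent T lam‖ ≤ (2*a) ^ n * (C / a ^ n * (1 + M')) := by
          exact mul_le_mul hlt hRlam2 hRnn (by positivity)
        have heq : (2*a) ^ n * (C / a ^ n * (1 + M')) = 2 ^ n * (1 + M') * C := by
          have han : a ^ n ≠ 0 := by positivity
          rw [mul_pow]
          field_simp
        rw [heq] at this
        linarith
      · push_neg at hba
        have hlt : ‖1 - lam‖ ^ n ≤ (2 * b) ^ n := by
          exact pow_le_pow_left₀ (norm_nonneg _) (by linarith) n
        have hstep : ‖1 - lam‖ ^ n * ‖resolvent T lam‖ ≤ (2*b) ^ n * (M' / b) := by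
          exact mul_le_mul hlt hRleb hRnn (by positivity)
        have heq : (2*b) ^ n * (M' / b) = 2 ^ n * (b ^ n * (M' / b)) := by
          rw [mul_pow]; ring
        have : (2:ℝ) ^ n * (b ^ n * (M' / b)) ≤ 2 ^ n * M' := by
          exact mul_le_mul_of_nonneg_left hpow_b (by positivity)
        rw [heq] at hstep
        linarith
    · push_neg at hθδ
      have hRmu := hArc θ hθ0 (Complex.abs_arg_le_pi lam) hθδ
      have hRlam2 : ‖resolvent T lam‖ ≤ K0 * (1 + M') := by
        refine hRlam_le.trans ?_
        exact mul_le_mul_of_nonneg_right hRmu (by linarith)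
      have hlt : ‖1 - lam‖ ^ n ≤ 3 ^ n := by
        refine pow_le_pow_left₀ (norm_nonneg _) ?_ n
        calc ‖1 - lam‖ ≤ ‖(1:ℂ)‖ + ‖lam‖ := norm_sub_le _ _
          _ ≤ 3 := by rw [norm_one]; linarith
      have : ‖1 - lam‖ ^ n * ‖resolvent T lam‖ ≤ 3 ^ n * (K0 * (1 + M')) := by
        exact mul_le_mul hlt hRlam2 hRnn (by positivity)
      have heq : (3:ℝ) ^ n * (K0 * (1 + M')) = 3 ^ n * (1 + M') * K0 := by ring
      rw [heq] at this
      linarith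

end Stmt16Helper

/-- If `T` is power-bounded with `σ(T) ∩ 𝕋 = {1}` and `‖R(e^{iθ},T)‖ = O(|θ|^{-n})` as
`θ → 0` for a positive integer `n`, then `sup{‖(I−T)ⁿ R(λ,T)‖ : |λ| > 1} < ∞`. -/
theorem stmt_16 {X : Type*} [NormedAddCommGroup X] [NormedSpace ℂ X] [CompleteSpace X]
    (T : X →L[ℂ] X) (M : ℝ) (hM : ∀ m : ℕ, ‖T ^ m‖ ≤ M)
    (hsp : spectrum ℂ T ∩ {z : ℂ | ‖z‖ = 1} = {1})
    (n : ℕ) (hn : 1 ≤ n)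
    (hO : ∃ C > (0 : ℝ), ∃ δ > (0 : ℝ), ∀ θ : ℝ, 0 < |θ| → |θ| < δ →
      ‖resolvent T (Complex.exp (θ * Complex.I))‖ ≤ C / |θ| ^ n) :
    ∃ C : ℝ, ∀ lambda : ℂ, 1 < ‖lambda‖ →
      ‖(1 - T) ^ n * resolvent T lambda‖ ≤ C := by
  obtain ⟨C, hC, δ, hδ, hO⟩ := hO
  set M' : ℝ := max M 1 with hM'_def
  have hM'1 : (1:ℝ) ≤ M' := le_max_right _ _
  have hM'0 : (0:ℝ) ≤ M' := by linarith
  have hM' : ∀ m : ℕ, ‖T ^ m‖ ≤ M' := fun m => (hM m).trans (le_max_left _ _)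
  -- bound on the arc away from 1
  have hπ := Real.pi_pos
  set δ' : ℝ := min δ Real.pi with hδ'_def
  have hδ'0 : 0 < δ' := lt_min hδ hπ
  set base : Set ℝ := {θ : ℝ | δ' ≤ |θ|} ∩ Set.Icc (-Real.pi) Real.pi with hbase_def
  have hbase_comp : IsCompact base :=
    IsCompact.inter_left isCompact_Icc (isClosed_le continuous_const continuous_abs)
  set K : Set ℂ := (fun θ : ℝ => Complex.exp (θ * Complex.I)) '' base with hK_def
  have hKcomp : IsCompact K := hbase_comp.image (by continuity)
  have hKres : ∀ z ∈ K, z ∈ resolventSet ℂ T := by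
    rintro z ⟨θ, ⟨hθ1, hθ2⟩, rfl⟩
    have habs : |θ| ≤ Real.pi := abs_le.mpr hθ2
    have hθ0 : θ ≠ 0 := by
      intro h; rw [h] at hθ1; simp at hθ1; linarith
    have hz1 : Complex.exp (θ * Complex.I) ≠ 1 := Stmt16Helper.exp_ne_one hθ0 habs
    have hznorm : ‖Complex.exp ((θ:ℂ) * Complex.I)‖ = 1 := by
      rw [Complex.norm_exp_ofReal_mul_I]
    have hns : Complex.exp ((θ:ℂ) * Complex.I) ∉ spectrum ℂ T := by
      intro h
      exact hz1 (by
        have hmem' : Complex.exp ((θ:ℂ) * Complex.I) ∈ spectrum ℂ T ∩ {z : ℂ | ‖z‖ = 1} :=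
          ⟨h, hznorm⟩
        rw [hsp] at hmem'
        exact hmem')
    exact spectrum.notMem_iff.mp hns
  have hcont : ContinuousOn (fun z : ℂ => ‖resolvent T z‖) K := by
    intro z hz
    have hu : IsUnit ((algebraMap ℂ (X →L[ℂ] X)) z - T) := hKres z hz
    have h1 : ContinuousAt (fun z : ℂ => (algebraMap ℂ (X →L[ℂ] X)) z - T) z :=
      ((continuous_algebraMap ℂ (X →L[ℂ] X)).sub continuous_const).continuousAt
    have h2 : ContinuousAt Ring.inverse ((algebraMap ℂ (X →L[ℂ] X)) z - T) := by
      have := NormedRing.inverse_continuousAt hu.unit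
      rwa [hu.unit_spec] at this
    have h3 : ContinuousAt (fun z : ℂ => resolvent T z) z := by
      have he : (fun z : ℂ => resolvent T z)
          = Ring.inverse ∘ (fun z : ℂ => (algebraMap ℂ (X →L[ℂ] X)) z - T) := rfl
      rw [he]
      exact ContinuousAt.comp (g := Ring.inverse)
        (f := fun z : ℂ => (algebraMap ℂ (X →L[ℂ] X)) z - T) (x := z) h2 h1
    exact h3.norm.continuousWithinAt
  obtain ⟨K0, hK0⟩ : ∃ K0 : ℝ, ∀ z ∈ K, ‖resolvent T z‖ ≤ K0 := by
    rcases K.eq_empty_or_nonempty with hKe | hKne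
    · exact ⟨0, by rw [hKe]; simp⟩
    · obtain ⟨K0, hK0⟩ := (hKcomp.bddAbove_image hcont)
      exact ⟨K0, fun z hz => hK0 (Set.mem_image_of_mem _ hz)⟩
  set K0' : ℝ := max K0 0 with hK0'_def
  have hK0'0 : 0 ≤ K0' := le_max_right _ _
  have hArc : ∀ θ : ℝ, θ ≠ 0 → |θ| ≤ Real.pi → δ ≤ |θ| →
      ‖resolvent T (Complex.exp (θ * Complex.I))‖ ≤ K0' := by
    intro θ hθ0 hθπ hθδ
    have hmem : Complex.exp ((θ:ℂ) * Complex.I) ∈ K := by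
      refine ⟨θ, ⟨?_, abs_le.mp hθπ⟩, rfl⟩
      exact le_trans (min_le_left _ _) hθδ
    exact (hK0 _ hmem).trans (le_max_left _ _)
  -- the constant
  set C₁ : ℝ := 2 ^ n * (1 + M') * C + 2 ^ n * M' + M' + 3 ^ n * (1 + M') * K0' with hC₁_def
  set D : ℝ := 3 ^ n * (2 + ‖T‖) ^ n * 2 ^ n with hD_def
  have hD0 : 0 ≤ D := by positivity
  refine ⟨max (‖(1 - T : X →L[ℂ] X)‖ ^ n * M') ((n:ℝ) * D + C₁), ?_⟩
  intro lam hlam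
  obtain ⟨hmem, hRle⟩ := Stmt16Helper.neumann T M' hM' lam hlam
  by_cases h2 : 2 ≤ ‖lam‖
  · -- easy region
    refine le_trans ?_ (le_max_left _ _)
    have h1 : ‖(1 - T : X →L[ℂ] X) ^ n * resolvent T lam‖
        ≤ ‖(1 - T : X →L[ℂ] X)‖ ^ n * ‖resolvent T lam‖ := by
      calc ‖(1 - T : X →L[ℂ] X) ^ n * resolvent T lam‖
          ≤ ‖(1 - T : X →L[ℂ] X) ^ n‖ * ‖resolvent T lam‖ := norm_mul_le _ _
        _ ≤ ‖(1 - T : X →L[ℂ] X)‖ ^ n * ‖resolvent T lam‖ :=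
            mul_le_mul_of_nonneg_right (norm_pow_le' _ (by omega)) (norm_nonneg _)
    have h2' : ‖resolvent T lam‖ ≤ M' := by
      refine hRle.trans ?_
      rw [div_le_iff₀ (by linarith)]
      nlinarith
    calc ‖(1 - T : X →L[ℂ] X) ^ n * resolvent T lam‖
        ≤ ‖(1 - T : X →L[ℂ] X)‖ ^ n * ‖resolvent T lam‖ := h1
      _ ≤ ‖(1 - T : X →L[ℂ] X)‖ ^ n * M' :=
          mul_le_mul_of_nonneg_left h2' (by positivity)
  · push_neg at h2
    refine le_trans ?_ (le_max_right _ _)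
    -- binomial expansion
    set A : X →L[ℂ] X := (algebraMap ℂ (X →L[ℂ] X)) lam - T with hA_def
    have hAR : A * resolvent T lam = 1 := Ring.mul_inverse_cancel _ hmem
    set R : X →L[ℂ] X := resolvent T lam with hR_def
    have hsplit : (1 - T : X →L[ℂ] X) = (1 - lam) • (1 : X →L[ℂ] X) + A := by
      rw [hA_def, Algebra.algebraMap_eq_smul_one, sub_smul, one_smul]
      abel
    have hcomm : Commute ((1 - lam) • (1 : X →L[ℂ] X)) A :=
      Commute.smul_left (Commute.one_left A) _
    have hpow : (1 - T : X →L[ℂ] X) ^ n * R = ∑ k ∈ Finset.range (n+1),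
        ((1 - lam) • (1 : X →L[ℂ] X)) ^ k * A ^ (n - k) * (n.choose k : X →L[ℂ] X) * R := by
      rw [hsplit, hcomm.add_pow, Finset.sum_mul]
    have hone : ‖(1 : X →L[ℂ] X)‖ ≤ 1 := by
      rw [ContinuousLinearMap.one_def]; exact ContinuousLinearMap.norm_id_le
    have h1lam3 : ‖1 - lam‖ ≤ 3 := by
      calc ‖1 - lam‖ ≤ ‖(1:ℂ)‖ + ‖lam‖ := norm_sub_le _ _
        _ ≤ 3 := by rw [norm_one]; linarith
    have hAnorm : ‖A‖ ≤ 2 + ‖T‖ := by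
      rw [hA_def]
      calc ‖(algebraMap ℂ (X →L[ℂ] X)) lam - T‖
          ≤ ‖(algebraMap ℂ (X →L[ℂ] X)) lam‖ + ‖T‖ := norm_sub_le _ _
        _ ≤ 2 + ‖T‖ := by
            have : (algebraMap ℂ (X →L[ℂ] X)) lam = lam • (1 : X →L[ℂ] X) :=
              Algebra.algebraMap_eq_smul_one lam
            rw [this, norm_smul lam (1 : X →L[ℂ] X)]
            have : ‖lam‖ * ‖(1 : X →L[ℂ] X)‖ ≤ 2 * 1 :=
              mul_le_mul h2.le hone (norm_nonneg _) (by norm_num)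
            linarith
    have hterm : ∀ k ∈ Finset.range n,
        ‖((1 - lam) • (1 : X →L[ℂ] X)) ^ k * A ^ (n - k) * (n.choose k : X →L[ℂ] X) * R‖
          ≤ D := by
      intro k hk
      have hkn : k < n := Finset.mem_range.mp hk
      obtain ⟨m, hm⟩ : ∃ m, n - k = m + 1 := ⟨n - k - 1, by omega⟩
      have hmn : m ≤ n := by omega
      have hre : ((1 - lam) • (1 : X →L[ℂ] X)) ^ k * A ^ (n - k) * (n.choose k : X →L[ℂ] X) * R
          = ((1 - lam) • (1 : X →L[ℂ] X)) ^ k * A ^ m * (n.choose k : X →L[ℂ] X) := by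
        rw [mul_assoc (((1 - lam) • (1 : X →L[ℂ] X)) ^ k * A ^ (n - k))
          ((n.choose k : X →L[ℂ] X)) R, (Nat.cast_commute (n.choose k) R).eq,
          ← mul_assoc, mul_assoc (((1 - lam) • (1 : X →L[ℂ] X)) ^ k) (A ^ (n-k)) R,
          hm, pow_succ, mul_assoc (A ^ m) A R, hAR, mul_one]
      rw [hre]
      have hx : ‖((1 - lam) • (1 : X →L[ℂ] X)) ^ k‖ ≤ 3 ^ n := by
        rw [smul_pow, one_pow, norm_smul ((1 - lam) ^ k) (1 : X →L[ℂ] X), norm_pow]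
        calc ‖1 - lam‖ ^ k * ‖(1 : X →L[ℂ] X)‖ ≤ 3 ^ k * 1 := by
              exact mul_le_mul (pow_le_pow_left₀ (norm_nonneg _) h1lam3 k) hone
                (norm_nonneg _) (by positivity)
          _ = 3 ^ k := mul_one _
          _ ≤ 3 ^ n := pow_le_pow_right₀ (by norm_num) hkn.le
      have hAm : ‖A ^ m‖ ≤ (2 + ‖T‖) ^ n := by
        have hb : (1:ℝ) ≤ 2 + ‖T‖ := by have := norm_nonneg T; linarith
        rcases Nat.eq_zero_or_pos m with hm0 | hm0
        · subst hm0
          rw [pow_zero]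
          calc ‖(1 : X →L[ℂ] X)‖ ≤ 1 := hone
            _ ≤ (2 + ‖T‖) ^ n := one_le_pow₀ hb
        · calc ‖A ^ m‖ ≤ ‖A‖ ^ m := norm_pow_le' _ hm0
            _ ≤ (2 + ‖T‖) ^ m := pow_le_pow_left₀ (norm_nonneg _) hAnorm m
            _ ≤ (2 + ‖T‖) ^ n := pow_le_pow_right₀ hb hmn
      have hc : ‖(n.choose k : X →L[ℂ] X)‖ ≤ 2 ^ n := by
        have hle : (n.choose k : ℝ) ≤ 2 ^ n := by
          have h1 : n.choose k ≤ ∑ i ∈ Finset.range (n+1), n.choose i :=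
            Finset.single_le_sum (f := fun i => n.choose i) (fun i _ => Nat.zero_le _)
              (Finset.mem_range.mpr (by omega))
          have h2 : ∑ i ∈ Finset.range (n+1), n.choose i = 2 ^ n := Nat.sum_range_choose n
          exact_mod_cast h1.trans_eq h2
        calc ‖(n.choose k : X →L[ℂ] X)‖ ≤ (n.choose k : ℝ) * ‖(1 : X →L[ℂ] X)‖ :=
              Nat.norm_cast_le _
          _ ≤ 2 ^ n * 1 := mul_le_mul hle hone (norm_nonneg _) (by positivity)
          _ = 2 ^ n := mul_one _
      calc ‖((1 - lam) • (1 : X →L[ℂ] X)) ^ k * A ^ m * (n.choose k : X →L[ℂ] X)‖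
          ≤ ‖((1 - lam) • (1 : X →L[ℂ] X)) ^ k * A ^ m‖ * ‖(n.choose k : X →L[ℂ] X)‖ :=
            norm_mul_le _ _
        _ ≤ (‖((1 - lam) • (1 : X →L[ℂ] X)) ^ k‖ * ‖A ^ m‖) * ‖(n.choose k : X →L[ℂ] X)‖ :=
            mul_le_mul_of_nonneg_right (norm_mul_le _ _) (norm_nonneg _)
        _ ≤ (3 ^ n * (2 + ‖T‖) ^ n) * 2 ^ n := by
            refine mul_le_mul ?_ hc (norm_nonneg _) (by positivity)
            exact mul_le_mul hx hAm (norm_nonneg _) (by positivity)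
        _ = D := by rw [hD_def]
    have hlast : ‖((1 - lam) • (1 : X →L[ℂ] X)) ^ n * A ^ (n - n) * (n.choose n : X →L[ℂ] X) * R‖
        ≤ C₁ := by
      have hsimp : ((1 - lam) • (1 : X →L[ℂ] X)) ^ n * A ^ (n - n) * (n.choose n : X →L[ℂ] X) * R
          = (1 - lam) ^ n • R := by
        rw [Nat.sub_self, pow_zero, mul_one, Nat.choose_self, Nat.cast_one, mul_one,
          smul_pow, one_pow, smul_mul_assoc, one_mul]
      rw [hsimp, norm_smul ((1 - lam) ^ n) R, norm_pow]
      exact Stmt16Helper.key_est T M' hM'1 hM' hsp n hn C δ K0' hC hδ hK0'0 hO hArc lam hlam h2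
    rw [hpow, Finset.sum_range_succ]
    calc ‖(∑ k ∈ Finset.range n,
            ((1 - lam) • (1 : X →L[ℂ] X)) ^ k * A ^ (n - k) * (n.choose k : X →L[ℂ] X) * R)
          + ((1 - lam) • (1 : X →L[ℂ] X)) ^ n * A ^ (n - n) * (n.choose n : X →L[ℂ] X) * R‖
        ≤ ‖∑ k ∈ Finset.range n,
            ((1 - lam) • (1 : X →L[ℂ] X)) ^ k * A ^ (n - k) * (n.choose k : X →L[ℂ] X) * R‖
          + ‖((1 - lam) • (1 : X →L[ℂ] X)) ^ n * A ^ (n - n) * (n.choose n : X →L[ℂ] X) * R‖ :=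
          norm_add_le _ _
      _ ≤ (n:ℝ) * D + C₁ := by
          refine add_le_add ?_ hlast
          calc ‖∑ k ∈ Finset.range n,
              ((1 - lam) • (1 : X →L[ℂ] X)) ^ k * A ^ (n - k) * (n.choose k : X →L[ℂ] X) * R‖
              ≤ ∑ k ∈ Finset.range n,
                ‖((1 - lam) • (1 : X →L[ℂ] X)) ^ k * A ^ (n - k) * (n.choose k : X →L[ℂ] X) * R‖ :=
                norm_sum_le _ _
            _ ≤ ∑ _k ∈ Finset.range n, D := Finset.sum_le_sum hterm
            _ = (n:ℝ) * D := by rw [Finset.sum_const, Finset.card_range, nsmul_eq_mul]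
end
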